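/- Let n ≥ 3 be an integer and let a, b be real numbers satisfying b > (n−2)/(n−1) and a > ((n−2)b − (n−3)) / ((n−1)b − (n−2)). Then P^(n)(a,b) > 0, where P^(n)(a,b) denotes the determinant of the n×n tridiagonal matrix with diagonal (a, 2, …, 2, b), sub- and super-diagonal entries −1, and all other entries 0. -/

import Mathlib

/-- `Pdet m a b` is the determinant of the `m × m` tridiagonal matrix with
diagonal `(a, 2, 2, …, 2, b)` (first diagonal entry `a`, last diagonal entry `b`,
all other diagonal entries `2`), sub- and super-diagonal entries `-1`,
and all remaining entries `0`. -/
def Pdet (m : ℕ) (a b : ℝ) : ℝ :=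
  (Matrix.of fun i j : Fin m =>
    if i = j then (if i.val = 0 then a else if i.val = m - 1 then b else 2)
    else if i.val + 1 = j.val ∨ j.val + 1 = i.val then -1 else 0).det

/-! Expanding along the first row, `P⁽ⁿ⁾(a, b) = a D_{n-1}(b) - D_{n-2}(b)`, where `D_k(b)` is the
determinant of the `k × k` matrix of the same shape with diagonal `(2, …, 2, b)`. The same expansion
gives `D_{k+2} = 2 D_{k+1} - D_k`, so `D_k(b) = k (b - 1) + 1`. The hypotheses say precisely that
`D_{n-1}(b) > 0` and `a > D_{n-2}(b) / D_{n-1}(b)`. -/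

namespace Matrix

variable {R : Type*} [CommRing R]

def tridiag (d : ℕ → R) (m : ℕ) : Matrix (Fin m) (Fin m) R :=
  of fun i j => if i = j then d i else if i.val + 1 = j.val ∨ j.val + 1 = i.val then -1 else 0

/-- The first column of this minor is `(-1, 0, …, 0)`. -/
theorem det_tridiag_submatrix_succ_succAbove_one (d : ℕ → R) (m : ℕ) :
    ((tridiag d (m + 2)).submatrix Fin.succ (Fin.succAbove 1)).det =
      -(tridiag (fun i => d (i + 2)) m).det := by
  set A := (tridiag d (m + 2)).submatrix Fin.succ (Fin.succAbove 1)
  have hcorner : A 0 0 = -1 := by simp [A, tridiag, Fin.succAbove]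
  have hcol : ∀ i : Fin m, A i.succ 0 = 0 := by
    intro i; simp [A, tridiag, Fin.ext_iff, Fin.succAbove]
  have hrest : A.submatrix (Fin.succAbove 0) Fin.succ = tridiag (fun i => d (i + 2)) m := by
    ext i j; simp [A, tridiag, Fin.ext_iff, Fin.succAbove]
  rw [det_succ_column_zero, Fin.sum_univ_succ]
  simp only [hcol, hcorner, hrest, mul_zero, zero_mul, Finset.sum_const_zero, add_zero,
    Fin.val_zero, pow_zero, one_mul, neg_one_mul]

theorem det_tridiag_succ_succ (d : ℕ → R) (m : ℕ) :
    (tridiag d (m + 2)).det =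
      d 0 * (tridiag (fun i => d (i + 1)) (m + 1)).det - (tridiag (fun i => d (i + 2)) m).det := by
  have h00 : tridiag d (m + 2) 0 0 = d 0 := by simp [tridiag]
  have h01 : tridiag d (m + 2) 0 1 = -1 := by simp [tridiag]
  have hrow : ∀ j : Fin m, tridiag d (m + 2) 0 j.succ.succ = 0 := by
    intro j; simp [tridiag, Fin.ext_iff]
  have hminor : (tridiag d (m + 2)).submatrix Fin.succ Fin.succ =
      tridiag (fun i => d (i + 1)) (m + 1) := by
    ext i j; simp [tridiag, Fin.ext_iff]
  rw [det_succ_row_zero, Fin.sum_univ_succ, Fin.sum_univ_succ]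
  simp only [hrow, mul_zero, zero_mul, Finset.sum_const_zero, add_zero]
  rw [Fin.succAbove_zero, hminor, Fin.succ_zero_eq_one, det_tridiag_submatrix_succ_succAbove_one,
    h00, h01, Fin.val_zero, Fin.val_one]
  ring

theorem det_tridiag_two_of_last (b : R) (m : ℕ) :
    (tridiag (fun i => if i + 1 = m then b else 2) m).det = m * (b - 1) + 1 := by
  induction m using Nat.twoStepInduction with
  | zero => simp
  | one => simp [tridiag]
  | more m ih ih' =>
    have h1 : (fun i => if i + 1 + 1 = m + 2 then b else 2) =
        fun i => if i + 1 = m + 1 then b else 2 := by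
      funext i; simp
    have h2 : (fun i => if i + 2 + 1 = m + 2 then b else 2) =
        fun i => if i + 1 = m then b else 2 := by
      funext i; simp
    rw [det_tridiag_succ_succ, h1, h2, ih, ih']
    simp
    ring

end Matrix

open Matrix

theorem Pdet_eq (n : ℕ) (hn : 2 ≤ n) (a b : ℝ) :
    Pdet n a b = a * ((n - 1) * b - (n - 2)) - ((n - 2) * b - (n - 3)) := by
  obtain ⟨m, rfl⟩ := Nat.exists_eq_add_of_le' hn
  change (tridiag (fun i => if i = 0 then a else if i = m + 2 - 1 then b else 2) (m + 2)).det = _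
  have h1 : (fun i => if i + 1 = 0 then a else if i + 1 = m + 2 - 1 then b else 2) =
      fun i => if i + 1 = m + 1 then b else 2 := by
    funext i; simp
  have h2 : (fun i => if i + 2 = 0 then a else if i + 2 = m + 2 - 1 then b else 2) =
      fun i => if i + 1 = m then b else 2 := by
    funext i; simp
  rw [det_tridiag_succ_succ, h1, h2, det_tridiag_two_of_last, det_tridiag_two_of_last, if_pos rfl]
  push_cast
  ring

theorem stmt9 (n : ℕ) (hn : 3 ≤ n) (a b : ℝ)
    (hb : b > ((n : ℝ) - 2) / ((n : ℝ) - 1))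
    (ha : a > (((n : ℝ) - 2) * b - ((n : ℝ) - 3)) / (((n : ℝ) - 1) * b - ((n : ℝ) - 2))) :
    Pdet n a b > 0 := by
  have hn1 : (0 : ℝ) < n - 1 := by
    have : (3 : ℝ) ≤ n := by exact_mod_cast hn
    linarith
  have hden : 0 < ((n : ℝ) - 1) * b - (n - 2) := by
    linarith [(div_lt_iff₀ hn1).mp hb]
  rw [Pdet_eq n (by omega)]
  linarith [(div_lt_iff₀ hden).mp ha]
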